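/- Every vector of the form h_{kl} + c₁a_{kk} + c₂a_{kl} + c₃a_{lk} + c₄a_{ll} with c_i ∈ ℤ_{≥0} is a hole: it lies in Q_sat but not in Q(A). -/

import Mathlib

open Finset

/-- The column `a_{ij}` of the CDEM matrix: 1 in coordinate `j`, 1 in coordinate
`d + i`, 1 in coordinate `2d` (the last one) iff `i = j`, and 0 elsewhere
(coordinates are 0-based). -/
def acol (d : ℕ) (i j : Fin d) : Fin (2 * d + 1) → ℤ := fun t =>
  (if (t : ℕ) = (j : ℕ) then 1 else 0) +
  (if (t : ℕ) = d + (i : ℕ) then 1 else 0) +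
  (if (t : ℕ) = 2 * d ∧ i = j then 1 else 0)

/-- The vector `h_{kl} = (a_{ll} + a_{lk} + a_{kl} + a_{kk}) / 2`. -/
def hvec (d : ℕ) (k l : Fin d) : Fin (2 * d + 1) → ℤ := fun t =>
  (acol d l l t + acol d l k t + acol d k l t + acol d k k t) / 2

/-- The CDEM semigroup: nonnegative integer combinations of the columns. -/
def cdemQ (d : ℕ) : Set (Fin (2 * d + 1) → ℤ) :=
  {b | ∃ x : Fin d → Fin d → ℕ, b = fun t => ∑ i, ∑ j, (x i j : ℤ) * acol d i j t}

/-- The real cone `K(A)` generated by the CDEM columns. -/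
def cdemCone (d : ℕ) (v : Fin (2 * d + 1) → ℝ) : Prop :=
  ∃ x : Fin d → Fin d → ℝ, (∀ i j, 0 ≤ x i j) ∧
    v = fun t => ∑ i, ∑ j, x i j * (acol d i j t : ℝ)

/-- The saturation `Q_sat = K(A) ∩ ℤ^{2d+1}` of the CDEM semigroup. -/
def cdemQsat (d : ℕ) : Set (Fin (2 * d + 1) → ℤ) :=
  {b | cdemCone d fun t => (b t : ℝ)}

/-- The `i`-th coordinate (0-based, `i < d`) as an index into `Fin (2d+1)`. -/
def idx1 (d : ℕ) (i : Fin d) : Fin (2 * d + 1) := ⟨(i : ℕ), by have := i.isLt; omega⟩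

/-- The `(d+i)`-th coordinate as an index into `Fin (2d+1)`. -/
def idx2 (d : ℕ) (i : Fin d) : Fin (2 * d + 1) := ⟨d + (i : ℕ), by have := i.isLt; omega⟩

/-! The vector lies in `Q_sat` because `h_{kl}` is half the sum of the four columns
`a_{kk}, a_{kl}, a_{lk}, a_{ll}`. Suppose it were `∑ x_{ij} a_{ij}` with `x_{ij} ∈ ℕ`.
Its coordinates `j` and `d + i` vanish for `i, j ∉ {k, l}`, so by nonnegativity only these four columns occur.
The functional `e_k + e_{d+l} + e_{2d}` is even on each of them, but takes the odd value
`3 + 2 (c₁ + c₃ + c₄)` on the vector. -/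

section Coordinates

variable {d : ℕ}

lemma acol_apply_idx1 (i j m : Fin d) : acol d i j (idx1 d m) = if m = j then 1 else 0 := by
  have := m.isLt
  simp only [acol, idx1, Fin.val_inj]
  omega

lemma acol_apply_idx2 (i j m : Fin d) : acol d i j (idx2 d m) = if m = i then 1 else 0 := by
  have := m.isLt
  have := j.isLt
  simp only [acol, idx2, Nat.add_left_cancel_iff, Fin.val_inj]
  omega

lemma acol_apply_last (i j : Fin d) : acol d i j (Fin.last (2 * d)) = if i = j then 1 else 0 := by
  have := i.isLt
  have := j.isLt
  simp only [acol, Fin.val_last, true_and, add_eq_right]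
  omega

lemma sum_acol_idx1 (x : Fin d → Fin d → ℤ) (m : Fin d) :
    ∑ i, ∑ j, x i j * acol d i j (idx1 d m) = ∑ i, x i m := by
  simp [acol_apply_idx1]

lemma sum_acol_idx2 (x : Fin d → Fin d → ℤ) (m : Fin d) :
    ∑ i, ∑ j, x i j * acol d i j (idx2 d m) = ∑ j, x m j := by
  simp [acol_apply_idx2]

lemma sum_acol_last (x : Fin d → Fin d → ℤ) :
    ∑ i, ∑ j, x i j * acol d i j (Fin.last (2 * d)) = ∑ i, x i i := by
  simp [acol_apply_last]

end Coordinates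

section Hvec

variable {d : ℕ} {k l : Fin d}

lemma acol_sum_eq (hkl : k ≠ l) (t : Fin (2 * d + 1)) :
    acol d l l t + acol d l k t + acol d k l t + acol d k k t =
      2 * (acol d k l t + acol d l k t + if (t : ℕ) = 2 * d then 1 else 0) := by
  simp only [acol, and_true, and_false, hkl, hkl.symm, ↓reduceIte, add_zero]
  ring

lemma hvec_eq (hkl : k ≠ l) (t : Fin (2 * d + 1)) :
    hvec d k l t = acol d k l t + acol d l k t + if (t : ℕ) = 2 * d then 1 else 0 := by
  rw [hvec, acol_sum_eq hkl, Int.mul_ediv_cancel_left _ two_ne_zero]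

lemma two_mul_hvec (hkl : k ≠ l) (t : Fin (2 * d + 1)) :
    2 * hvec d k l t = acol d l l t + acol d l k t + acol d k l t + acol d k k t := by
  rw [hvec_eq hkl, acol_sum_eq hkl]

lemma hvec_apply_idx1 (hkl : k ≠ l) (m : Fin d) :
    hvec d k l (idx1 d m) = (if m = k then 1 else 0) + if m = l then 1 else 0 := by
  have := m.isLt
  rw [hvec_eq hkl, acol_apply_idx1, acol_apply_idx1,
    if_neg (show (idx1 d m : ℕ) ≠ 2 * d by simp only [idx1]; omega)]
  ring

lemma hvec_apply_idx2 (hkl : k ≠ l) (m : Fin d) :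
    hvec d k l (idx2 d m) = (if m = k then 1 else 0) + if m = l then 1 else 0 := by
  have := m.isLt
  rw [hvec_eq hkl, acol_apply_idx2, acol_apply_idx2,
    if_neg (show (idx2 d m : ℕ) ≠ 2 * d by simp only [idx2]; omega)]
  ring

lemma hvec_apply_last (hkl : k ≠ l) : hvec d k l (Fin.last (2 * d)) = 1 := by
  simp [hvec_eq hkl, acol_apply_last, hkl, hkl.symm]

end Hvec

section Cone

variable {d : ℕ} {v w : Fin (2 * d + 1) → ℝ}

lemma cdemCone_add (hv : cdemCone d v) (hw : cdemCone d w) : cdemCone d (v + w) := by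
  obtain ⟨x, hx, rfl⟩ := hv
  obtain ⟨y, hy, rfl⟩ := hw
  refine ⟨x + y, fun i j => add_nonneg (hx i j) (hy i j), ?_⟩
  ext t
  simp [add_mul, sum_add_distrib]

lemma cdemCone_smul {c : ℝ} (hc : 0 ≤ c) (hv : cdemCone d v) : cdemCone d (c • v) := by
  obtain ⟨x, hx, rfl⟩ := hv
  refine ⟨c • x, fun i j => mul_nonneg hc (hx i j), ?_⟩
  ext t
  simp [mul_sum, mul_assoc]

lemma cdemCone_acol (i j : Fin d) : cdemCone d fun t => (acol d i j t : ℝ) := by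
  refine ⟨fun p q => if p = i ∧ q = j then 1 else 0, fun p q => by positivity, ?_⟩
  ext t
  simp [ite_and]

lemma cdemCone_add_smul_acol {c : ℝ} (hv : cdemCone d v) (hc : 0 ≤ c) (i j : Fin d) :
    cdemCone d fun t => v t + c * acol d i j t :=
  cdemCone_add hv (cdemCone_smul hc (cdemCone_acol i j))

lemma cdemCone_hvec {k l : Fin d} (hkl : k ≠ l) : cdemCone d fun t => (hvec d k l t : ℝ) := by
  have half : (0 : ℝ) ≤ 2⁻¹ := by norm_num
  convert cdemCone_add_smul_acol (cdemCone_add_smul_acol (cdemCone_add_smul_acol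
    (cdemCone_smul half (cdemCone_acol l l)) half l k) half k l) half k k using 2 with t
  have := congrArg (Int.cast : ℤ → ℝ) (two_mul_hvec hkl t)
  push_cast at this
  simp only [Pi.smul_apply, smul_eq_mul]
  linarith

end Cone

lemma notMem_cdemQ_of_odd {d : ℕ} {b : Fin (2 * d + 1) → ℤ} {k l : Fin d} (hkl : k ≠ l)
    (hcol : ∀ j, j ≠ k → j ≠ l → b (idx1 d j) = 0)
    (hrow : ∀ i, i ≠ k → i ≠ l → b (idx2 d i) = 0)
    (hodd : Odd (b (idx1 d k) + b (idx2 d l) + b (Fin.last (2 * d)))) : b ∉ cdemQ d := by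
  rintro ⟨x, rfl⟩
  simp only [sum_acol_idx1, sum_acol_idx2, sum_acol_last] at hcol hrow hodd
  have hcol0 : ∀ i j, j ≠ k → j ≠ l → x i j = 0 := fun i j hjk hjl =>
    sum_eq_zero_iff.mp (by exact_mod_cast hcol j hjk hjl) i (mem_univ i)
  have hrow0 : ∀ i j, i ≠ k → i ≠ l → x i j = 0 := fun i j hik hil =>
    sum_eq_zero_iff.mp (by exact_mod_cast hrow i hik hil) j (mem_univ j)
  rw [Fintype.sum_eq_add k l hkl fun i hi => by simp [hrow0 i k hi.1 hi.2],
    Fintype.sum_eq_add k l hkl fun j hj => by simp [hcol0 l j hj.1 hj.2],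
    Fintype.sum_eq_add k l hkl fun i hi => by simp [hrow0 i i hi.1 hi.2]] at hodd
  obtain ⟨m, hm⟩ := hodd
  omega

theorem hvec_monoid_one_holes_general (d : ℕ) (k l : Fin d) (hkl : k < l)
    (c₁ c₂ c₃ c₄ : ℕ) :
    (fun t => hvec d k l t + (c₁ : ℤ) * acol d k k t + (c₂ : ℤ) * acol d k l t +
        (c₃ : ℤ) * acol d l k t + (c₄ : ℤ) * acol d l l t) ∈ cdemQsat d ∧
    (fun t => hvec d k l t + (c₁ : ℤ) * acol d k k t + (c₂ : ℤ) * acol d k l t +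
        (c₃ : ℤ) * acol d l k t + (c₄ : ℤ) * acol d l l t) ∉ cdemQ d := by
  have hkl' : k ≠ l := hkl.ne
  constructor
  · show cdemCone d fun t => ((_ : ℤ) : ℝ)
    push_cast
    apply_rules [cdemCone_add_smul_acol, cdemCone_hvec hkl', Nat.cast_nonneg]
  · apply notMem_cdemQ_of_odd hkl'
    · intro j hjk hjl
      simp [hvec_apply_idx1 hkl', acol_apply_idx1, hjk, hjl]
    · intro i hik hil
      simp [hvec_apply_idx2 hkl', acol_apply_idx2, hik, hil]
    · simp [hvec_apply_idx1 hkl', hvec_apply_idx2 hkl', hvec_apply_last hkl', acol_apply_idx1,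
        acol_apply_idx2, acol_apply_last, hkl', hkl'.symm]
      exact ⟨c₁ + c₃ + c₄ + 1, by ring⟩

/-- Every vector of the form `h_{kl} + c₁ a_{kk} + c₂ a_{kl} + c₃ a_{lk} + c₄ a_{ll}`
with nonnegative integer `cᵢ` is a hole: it lies in `Q_sat` but not in `Q(A)`. -/
theorem hvec_monoid_one_holes (d : ℕ) (hd : 2 ≤ d) (k l : Fin d) (hkl : k < l)
    (c₁ c₂ c₃ c₄ : ℕ) :
    (fun t => hvec d k l t + (c₁ : ℤ) * acol d k k t + (c₂ : ℤ) * acol d k l t +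
        (c₃ : ℤ) * acol d l k t + (c₄ : ℤ) * acol d l l t) ∈ cdemQsat d ∧
    (fun t => hvec d k l t + (c₁ : ℤ) * acol d k k t + (c₂ : ℤ) * acol d k l t +
        (c₃ : ℤ) * acol d l k t + (c₄ : ℤ) * acol d l l t) ∉ cdemQ d :=
  hvec_monoid_one_holes_general d k l hkl c₁ c₂ c₃ c₄
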